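/- Let ℏ₀ > 0 and define N : ℝ → ℝ by N(ℏ) := sup_{a∈ℤ} |sin(2π ℏ a / ℏ₀)|. Then N(ℏ₀) = 0, while N(ℏ₀·(1 + 1/(4k))) = 1 for every positive integer k; consequently N is not continuous at ℏ₀. (N(ℏ) is the operator norm ‖Q_ℏ^W(e₀ ⊗ h)‖ of the Weyl quantization of the phase-space function (q,p) ↦ sin(p₁/ℏ₀) on T*T^n, so Rieffel's condition — continuity of ℏ ↦ ‖Q_ℏ^W(f)‖ away from 0 — fails for Weyl quantization on the torus.) -/

import Mathlib

/-- `N(ℏ) = sup_{a∈ℤ} |sin(2πℏa/ℏ₀)|`, the operator norm of the Weyl quantization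
`Q_ℏ^W(e₀ ⊗ h)` of the phase-space function `(q,p) ↦ sin(p₁/ℏ₀)` on `T*Tⁿ`. -/
noncomputable def Nfun (h0 : ℝ) (h : ℝ) : ℝ :=
  ⨆ a : ℤ, |Real.sin (2 * Real.pi * h * a / h0)|

/-! At `ℏ = ℏ₀` every sample `2πa` is a zero of `sin`, so `N(ℏ₀) = 0`. At `ℏ = ℏ₀(1 + 1/(4k))`
the sample `a = k` lands on `2πk + π/2`, where `|sin| = 1`, its maximum, so `N = 1` there.
These points accumulate at `ℏ₀`, which rules out continuity. -/

open Filter Topology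

lemma not_continuousAt_of_tendsto_of_eventuallyEq {X Y ι : Type*} [TopologicalSpace X]
    [TopologicalSpace Y] [T2Space Y] {l : Filter ι} [l.NeBot] {f : X → Y} {x : X} {u : ι → X}
    {c : Y} (hu : Tendsto u l (𝓝 x)) (hfu : f ∘ u =ᶠ[l] fun _ => c) (hc : c ≠ f x) :
    ¬ ContinuousAt f x := fun hf =>
  hc <| tendsto_nhds_unique tendsto_const_nhds ((tendsto_congr' hfu).mp (hf.tendsto.comp hu))

namespace Nfun

lemma bddAbove_range (h0 h : ℝ) :
    BddAbove (Set.range fun a : ℤ => |Real.sin (2 * Real.pi * h * a / h0)|) :=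
  ⟨1, by rintro _ ⟨a, rfl⟩; exact Real.abs_sin_le_one _⟩

lemma le_one (h0 h : ℝ) : Nfun h0 h ≤ 1 :=
  ciSup_le fun _ => Real.abs_sin_le_one _

lemma eq_one_of_abs_sin_eq_one {h0 h : ℝ} (a : ℤ)
    (ha : |Real.sin (2 * Real.pi * h * a / h0)| = 1) : Nfun h0 h = 1 :=
  (le_one h0 h).antisymm (ha ▸ le_ciSup (bddAbove_range h0 h) a)

lemma self_eq_zero {h0 : ℝ} (hh0 : h0 ≠ 0) : Nfun h0 h0 = 0 := by
  have hzero (a : ℤ) : |Real.sin (2 * Real.pi * h0 * a / h0)| = 0 := by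
    have : 2 * Real.pi * h0 * a / h0 = ((2 * a : ℤ) : ℝ) * Real.pi := by
      push_cast
      field_simp
    rw [this, Real.sin_int_mul_pi, abs_zero]
  simp only [Nfun, hzero, ciSup_const]

lemma eq_one_at_quarter_shift {h0 : ℝ} (hh0 : h0 ≠ 0) {k : ℕ} (hk : 0 < k) :
    Nfun h0 (h0 * (1 + 1 / (4 * k))) = 1 := by
  refine eq_one_of_abs_sin_eq_one k ?_
  have hk' : (k : ℝ) ≠ 0 := Nat.cast_ne_zero.mpr hk.ne'
  have harg : 2 * Real.pi * (h0 * (1 + 1 / (4 * k))) * ((k : ℤ) : ℝ) / h0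
      = Real.pi / 2 + (k : ℤ) * (2 * Real.pi) := by
    push_cast
    field_simp
    ring
  rw [harg, Real.sin_add_int_mul_two_pi, Real.sin_pi_div_two, abs_one]

end Nfun

lemma tendsto_mul_one_add_one_div_four_mul (h0 : ℝ) :
    Tendsto (fun k : ℕ => h0 * (1 + 1 / (4 * k))) atTop (𝓝 h0) := by
  have hinv : Tendsto (fun k : ℕ => 1 / (4 * (k : ℝ))) atTop (𝓝 0) := by
    simp only [one_div]
    exact (tendsto_natCast_atTop_atTop.const_mul_atTop four_pos).inv_tendsto_atTop
  simpa using (hinv.const_add 1).const_mul h0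

/-- Failure of Rieffel's condition away from 0 for Weyl quantization on the torus:
`N(ℏ₀) = 0`, while `N(ℏ₀·(1 + 1/(4k))) = 1` for every positive integer `k`; consequently
`N` is not continuous at `ℏ₀`. -/
theorem stmt17 (h0 : ℝ) (hh0 : 0 < h0) :
    Nfun h0 h0 = 0 ∧
    (∀ k : ℕ, 0 < k → Nfun h0 (h0 * (1 + 1 / (4 * k))) = 1) ∧
    ¬ ContinuousAt (Nfun h0) h0 := by
  have hone : ∀ k : ℕ, 0 < k → Nfun h0 (h0 * (1 + 1 / (4 * k))) = 1 :=
    fun _ hk => Nfun.eq_one_at_quarter_shift hh0.ne' hk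
  refine ⟨Nfun.self_eq_zero hh0.ne', hone, ?_⟩
  refine not_continuousAt_of_tendsto_of_eventuallyEq (tendsto_mul_one_add_one_div_four_mul h0)
    ((eventually_gt_atTop 0).mono hone) ?_
  rw [Nfun.self_eq_zero hh0.ne']
  exact one_ne_zero
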